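/- arXiv:2605.16520 — 5 statements merged into one kernel-verified Lean document; each statement's English description precedes it below -/
import Mathlib

section
/- For every t > 0 and every x ∈ ℝ^d, the smoothed objective g(·;t) is differentiable at x and satisfies Tweedie's identity ∇_x g(x;t) = (λ/t)·(x − m(x;t)), where m(x;t) = ∫_{ℝ^d} y · p_{0|t}(y|x) dy is the posterior mean. -/
open MeasureTheory
open scoped RealInnerProductSpace

/-- The Gibbs density `p₀(y) = e^{-f(y)/λ} / ∫ e^{-f(z)/λ} dz`. -/
noncomputable def gibbs {d : ℕ} (lam : ℝ) (f : EuclideanSpace ℝ (Fin d) → ℝ)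
    (y : EuclideanSpace ℝ (Fin d)) : ℝ :=
  Real.exp (-(f y) / lam) / ∫ z, Real.exp (-(f z) / lam)

/-- The Gaussian kernel `k(z;t) = (2πt)^{-d/2} e^{-‖z‖²/(2t)}`. -/
noncomputable def gaussK {d : ℕ} (t : ℝ) (z : EuclideanSpace ℝ (Fin d)) : ℝ :=
  (2 * Real.pi * t) ^ (-(d : ℝ) / 2) * Real.exp (-‖z‖ ^ 2 / (2 * t))

/-- The smoothed density `p(x;t) = ∫ p₀(y) k(x-y;t) dy`. -/
noncomputable def smoothedDensity {d : ℕ} (lam : ℝ) (f : EuclideanSpace ℝ (Fin d) → ℝ)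
    (t : ℝ) (x : EuclideanSpace ℝ (Fin d)) : ℝ :=
  ∫ y, gibbs lam f y * gaussK t (x - y)

/-- The smoothed objective `g(x;t) = -λ log p(x;t)`. -/
noncomputable def smoothedObj {d : ℕ} (lam : ℝ) (f : EuclideanSpace ℝ (Fin d) → ℝ)
    (t : ℝ) (x : EuclideanSpace ℝ (Fin d)) : ℝ :=
  -lam * Real.log (smoothedDensity lam f t x)

/-- The posterior density `p_{0|t}(y|x) = p₀(y) k(x-y;t) / p(x;t)`. -/
noncomputable def posterior {d : ℕ} (lam : ℝ) (f : EuclideanSpace ℝ (Fin d) → ℝ)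
    (t : ℝ) (x y : EuclideanSpace ℝ (Fin d)) : ℝ :=
  gibbs lam f y * gaussK t (x - y) / smoothedDensity lam f t x

section aux
variable {d : ℕ} {lam : ℝ} {f : EuclideanSpace ℝ (Fin d) → ℝ} {t : ℝ}

lemma gibbs_pos (hZpos : 0 < ∫ z, Real.exp (-(f z) / lam)) (y : EuclideanSpace ℝ (Fin d)) :
    0 < gibbs lam f y := div_pos (Real.exp_pos _) hZpos

lemma gibbs_measurable (hf : Measurable f) : Measurable (gibbs lam f) :=
  (Real.measurable_exp.comp (hf.neg.div_const lam)).div_const _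

lemma gibbs_integrable (hZfin : Integrable (fun z => Real.exp (-(f z) / lam))) :
    Integrable (gibbs lam f) := hZfin.div_const _

lemma gaussK_pos (ht : 0 < t) (z : EuclideanSpace ℝ (Fin d)) : 0 < gaussK t z :=
  mul_pos (Real.rpow_pos_of_pos (by positivity) _) (Real.exp_pos _)

lemma gaussK_le (ht : 0 < t) (z : EuclideanSpace ℝ (Fin d)) :
    gaussK t z ≤ (2 * Real.pi * t) ^ (-(d : ℝ) / 2) := by
  have h1 : Real.exp (-‖z‖ ^ 2 / (2 * t)) ≤ 1 := by
    rw [Real.exp_le_one_iff]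
    have : (0:ℝ) ≤ ‖z‖ ^ 2 / (2 * t) := by positivity
    linarith [this, (neg_div (2*t) (‖z‖^2)) ]
  calc gaussK t z ≤ (2 * Real.pi * t) ^ (-(d : ℝ) / 2) * 1 := by
        unfold gaussK
        exact mul_le_mul_of_nonneg_left h1 (le_of_lt (Real.rpow_pos_of_pos (by positivity) _))
    _ = _ := mul_one _

lemma mul_exp_le (ht : 0 < t) {s : ℝ} (hs : 0 ≤ s) :
    s * Real.exp (-s ^ 2 / (2 * t)) ≤ Real.sqrt t := by
  have hst : Real.sqrt t * Real.sqrt t = t := Real.mul_self_sqrt ht.le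
  have hsp : 0 < Real.sqrt t := Real.sqrt_pos.2 ht
  have hE : s ^ 2 / (2 * t) + 1 ≤ Real.exp (s ^ 2 / (2 * t)) := Real.add_one_le_exp _
  have hEpos : (0:ℝ) < Real.exp (s ^ 2 / (2 * t)) := Real.exp_pos _
  rw [show -s ^ 2 / (2 * t) = -(s ^ 2 / (2 * t)) by ring, Real.exp_neg,
    mul_inv_le_iff₀' hEpos]
  have key : s ≤ Real.sqrt t * (s ^ 2 / (2 * t) + 1) := by
    have h2 : Real.sqrt t * (s ^ 2 / (2 * t) + 1) - s
        = (s - Real.sqrt t) ^ 2 / (2 * Real.sqrt t) + Real.sqrt t / 2 := by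
      have h0 : Real.sqrt t ≠ 0 := hsp.ne'
      have htne : t ≠ 0 := ht.ne'
      field_simp
      nlinarith [hst]
    have h3 : 0 ≤ (s - Real.sqrt t) ^ 2 / (2 * Real.sqrt t) + Real.sqrt t / 2 := by positivity
    linarith
  calc s ≤ Real.sqrt t * (s ^ 2 / (2 * t) + 1) := key
    _ ≤ Real.exp (s ^ 2 / (2 * t)) * Real.sqrt t := by
        rw [mul_comm]; exact mul_le_mul_of_nonneg_right hE hsp.le

lemma norm_mul_gaussK_le (ht : 0 < t) (z : EuclideanSpace ℝ (Fin d)) :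
    ‖z‖ * gaussK t z ≤ (2 * Real.pi * t) ^ (-(d : ℝ) / 2) * Real.sqrt t := by
  unfold gaussK
  rw [show ‖z‖ * ((2 * Real.pi * t) ^ (-(d : ℝ) / 2) * Real.exp (-‖z‖ ^ 2 / (2 * t)))
      = (2 * Real.pi * t) ^ (-(d : ℝ) / 2) * (‖z‖ * Real.exp (-‖z‖ ^ 2 / (2 * t))) by ring]
  exact mul_le_mul_of_nonneg_left (mul_exp_le ht (norm_nonneg z))
    (le_of_lt (Real.rpow_pos_of_pos (by positivity) _))

lemma gaussK_continuous (ht : 0 < t) : Continuous (gaussK (d := d) t) := by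
  unfold gaussK; fun_prop

lemma gaussK_hasFDerivAt (ht : 0 < t) (z : EuclideanSpace ℝ (Fin d)) :
    HasFDerivAt (gaussK (d := d) t) (innerSL ℝ ((-(gaussK t z) / t) • z)) z := by
  have heq : gaussK (d := d) t = fun w =>
      (2 * Real.pi * t) ^ (-(d : ℝ) / 2) * Real.exp ((-(1 / (2 * t))) * ‖w‖ ^ 2) := by
    funext w
    unfold gaussK
    congr 1
    ring
  rw [heq]
  have h1 : HasFDerivAt (fun w : EuclideanSpace ℝ (Fin d) => ‖w‖ ^ 2)
      (2 • innerSL ℝ z) z := (hasStrictFDerivAt_norm_sq z).hasFDerivAt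
  have h2 := ((h1.const_mul (-(1 / (2 * t)))).exp.const_mul
    ((2 * Real.pi * t) ^ (-(d : ℝ) / 2)))
  refine h2.congr_fderiv ?_
  ext w
  simp only [ContinuousLinearMap.smul_apply, innerSL_apply_apply, smul_eq_mul,
    real_inner_smul_left, ContinuousLinearMap.coe_smul', Pi.smul_apply, nsmul_eq_mul,
    Nat.cast_ofNat]
  have htne : t ≠ 0 := ht.ne'
  field_simp

end aux

/-- Tweedie's identity: for every `t > 0` and `x`, the smoothed objective
`g(·;t)` is differentiable at `x` with gradient `(λ/t) (x - m(x;t))`, where `m(x;t)` is the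
posterior mean. -/
theorem tweedie_first_order
    (d : ℕ) (hd : 1 ≤ d) (lam : ℝ) (hlam : 0 < lam)
    (f : EuclideanSpace ℝ (Fin d) → ℝ) (hf : Measurable f)
    (hZpos : 0 < ∫ z, Real.exp (-(f z) / lam))
    (hZfin : Integrable (fun z => Real.exp (-(f z) / lam)))
    (hmom : Integrable (fun y => ‖y‖ * gibbs lam f y))
    (t : ℝ) (ht : 0 < t) (x : EuclideanSpace ℝ (Fin d)) :
    HasGradientAt (fun x' => smoothedObj lam f t x')
      ((lam / t) • (x - ∫ y, posterior lam f t x y • y)) x := by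
  have hgm := gibbs_measurable (lam := lam) hf
  have hgi := gibbs_integrable (lam := lam) hZfin
  set c : ℝ := (2 * Real.pi * t) ^ (-(d : ℝ) / 2) with hc
  have hcpos : 0 < c := Real.rpow_pos_of_pos (by positivity) _
  have hqmeas : ∀ x' : EuclideanSpace ℝ (Fin d),
      AEStronglyMeasurable (fun y => gibbs lam f y * gaussK t (x' - y)) volume := fun x' =>
    hgm.aestronglyMeasurable.mul
      (((gaussK_continuous ht).comp (continuous_const.sub continuous_id)).aestronglyMeasurable)
  have hqnonneg : ∀ x' y : EuclideanSpace ℝ (Fin d), 0 ≤ gibbs lam f y * gaussK t (x' - y) :=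
    fun x' y => le_of_lt (mul_pos (gibbs_pos hZpos y) (gaussK_pos ht _))
  have hqint : ∀ x' : EuclideanSpace ℝ (Fin d),
      Integrable (fun y => gibbs lam f y * gaussK t (x' - y)) := by
    intro x'
    refine (hgi.const_mul c).mono (hqmeas x') (Filter.Eventually.of_forall fun y => ?_)
    rw [Real.norm_eq_abs, Real.norm_eq_abs, abs_of_nonneg (hqnonneg x' y)]
    calc gibbs lam f y * gaussK t (x' - y) ≤ gibbs lam f y * c :=
          mul_le_mul_of_nonneg_left (gaussK_le ht (x' - y)) (gibbs_pos hZpos y).le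
      _ ≤ |c * gibbs lam f y| := by rw [mul_comm]; exact le_abs_self _
  -- positivity of the smoothed density
  have hppos : 0 < smoothedDensity lam f t x := by
    rw [smoothedDensity,
      integral_pos_iff_support_of_nonneg (fun y => hqnonneg x y) (hqint x)]
    have hsupp : (Function.support fun y => gibbs lam f y * gaussK t (x - y)) = Set.univ := by
      ext y
      simp only [Function.mem_support, Set.mem_univ, iff_true]
      exact (mul_pos (gibbs_pos hZpos y) (gaussK_pos ht _)).ne'
    rw [hsupp]
    exact isOpen_univ.measure_pos volume ⟨x, trivial⟩
  have hpne : smoothedDensity lam f t x ≠ 0 := hppos.ne'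
  -- norm bound for the derivative integrand
  have hnormv : ∀ x' y : EuclideanSpace ℝ (Fin d),
      ‖(-(gibbs lam f y * gaussK t (x' - y)) / t) • (x' - y)‖
        ≤ c * Real.sqrt t / t * gibbs lam f y := by
    intro x' y
    rw [norm_smul, Real.norm_eq_abs, abs_div, abs_neg, abs_of_nonneg (hqnonneg x' y),
      abs_of_pos ht]
    calc gibbs lam f y * gaussK t (x' - y) / t * ‖x' - y‖
        = gibbs lam f y * (‖x' - y‖ * gaussK t (x' - y)) / t := by ring
      _ ≤ gibbs lam f y * (c * Real.sqrt t) / t := by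
          rw [div_eq_mul_inv, div_eq_mul_inv]
          exact mul_le_mul_of_nonneg_right
            (mul_le_mul_of_nonneg_left (norm_mul_gaussK_le ht _) (gibbs_pos hZpos y).le)
            (by positivity)
      _ = c * Real.sqrt t / t * gibbs lam f y := by ring
  have hBint : Integrable (fun y => c * Real.sqrt t / t * gibbs lam f y) :=
    hgi.const_mul _
  have hBnonneg : ∀ y : EuclideanSpace ℝ (Fin d),
      0 ≤ c * Real.sqrt t / t * gibbs lam f y := fun y => by
    have := (gibbs_pos hZpos y).le
    positivity
  -- integrability of the vector integrand
  have hvmeas : AEStronglyMeasurable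
      (fun y => (-(gibbs lam f y * gaussK t (x - y)) / t) • (x - y)) volume := by
    have hqm : Measurable fun y => gibbs lam f y * gaussK t (x - y) :=
      hgm.mul ((gaussK_continuous ht).measurable.comp (measurable_const.sub measurable_id))
    exact (hqm.neg.div_const t).aestronglyMeasurable.smul
      ((continuous_const.sub continuous_id).aestronglyMeasurable)
  have hvint : Integrable (fun y => (-(gibbs lam f y * gaussK t (x - y)) / t) • (x - y)) := by
    refine hBint.mono hvmeas (Filter.Eventually.of_forall fun y => ?_)
    rw [Real.norm_eq_abs (c * Real.sqrt t / t * gibbs lam f y), abs_of_nonneg (hBnonneg y)]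
    exact hnormv x y
  -- pointwise derivative
  have hderiv : ∀ (y x' : EuclideanSpace ℝ (Fin d)),
      HasFDerivAt (fun x'' => gibbs lam f y * gaussK t (x'' - y))
        (innerSL ℝ ((-(gibbs lam f y * gaussK t (x' - y)) / t) • (x' - y))) x' := by
    intro y x'
    have h1 : HasFDerivAt (fun x'' : EuclideanSpace ℝ (Fin d) => x'' - y)
        (ContinuousLinearMap.id ℝ _) x' := (hasFDerivAt_id x').sub_const y
    have h2 := ((gaussK_hasFDerivAt ht (x' - y)).comp x' h1).const_mul (gibbs lam f y)
    refine h2.congr_fderiv ?_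
    rw [ContinuousLinearMap.comp_id, ← _root_.map_smul]
    congr 1
    rw [smul_smul]
    congr 1
    ring
  have hF'meas : AEStronglyMeasurable
      (fun y => innerSL ℝ ((-(gibbs lam f y * gaussK t (x - y)) / t) • (x - y))) volume :=
    (innerSL ℝ).continuous.comp_aestronglyMeasurable hvmeas
  -- derivative of the smoothed density
  have hkey : HasFDerivAt (fun x' => smoothedDensity lam f t x')
      (∫ y, innerSL ℝ ((-(gibbs lam f y * gaussK t (x - y)) / t) • (x - y))) x := by
    have := hasFDerivAt_integral_of_dominated_of_fderiv_le (μ := volume)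
      (F := fun x' y => gibbs lam f y * gaussK t (x' - y))
      (F' := fun x' y => innerSL ℝ ((-(gibbs lam f y * gaussK t (x' - y)) / t) • (x' - y)))
      (x₀ := x) (bound := fun y => c * Real.sqrt t / t * gibbs lam f y)
      Filter.univ_mem (Filter.Eventually.of_forall hqmeas) (hqint x) hF'meas
      (Filter.Eventually.of_forall fun y => fun x' _ => by
        rw [innerSL_apply_norm]; exact hnormv x' y)
      hBint
      (Filter.Eventually.of_forall fun y => fun x' _ => hderiv y x')
    simpa [smoothedDensity] using this
  have hcomm : (∫ y, innerSL ℝ ((-(gibbs lam f y * gaussK t (x - y)) / t) • (x - y)))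
      = innerSL ℝ (∫ y, (-(gibbs lam f y * gaussK t (x - y)) / t) • (x - y)) :=
    ContinuousLinearMap.integral_comp_comm _ hvint
  rw [hcomm] at hkey
  set vint := ∫ y, (-(gibbs lam f y * gaussK t (x - y)) / t) • (x - y) with hvintdef
  -- chain rule
  have hlog := (Real.hasDerivAt_log hpne).comp_hasFDerivAt x hkey
  have hobj := hlog.const_mul (-lam)
  -- integrals for the vector identity
  have hqx : Integrable (fun y => (gibbs lam f y * gaussK t (x - y)) • x) :=
    (hqint x).smul_const x
  have hqy : Integrable (fun y => (gibbs lam f y * gaussK t (x - y)) • y) := by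
    refine (hmom.const_mul c).mono ((hqmeas x).smul aestronglyMeasurable_id)
      (Filter.Eventually.of_forall fun y => ?_)
    rw [norm_smul, Real.norm_eq_abs (gibbs lam f y * gaussK t (x - y)),
      abs_of_nonneg (hqnonneg x y), Real.norm_eq_abs (c * (‖y‖ * gibbs lam f y))]
    calc gibbs lam f y * gaussK t (x - y) * ‖y‖ ≤ gibbs lam f y * c * ‖y‖ :=
          mul_le_mul_of_nonneg_right
            (mul_le_mul_of_nonneg_left (gaussK_le ht _) (gibbs_pos hZpos y).le)
            (norm_nonneg y)
      _ = c * (‖y‖ * gibbs lam f y) := by ring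
      _ ≤ |c * (‖y‖ * gibbs lam f y)| := le_abs_self _
  set w := ∫ y, (gibbs lam f y * gaussK t (x - y)) • y with hwdef
  have hv2 : vint = (-t⁻¹) • ((smoothedDensity lam f t x) • x - w) := by
    rw [hvintdef]
    have heq : (fun y => (-(gibbs lam f y * gaussK t (x - y)) / t) • (x - y))
        = fun y => (-t⁻¹) • ((gibbs lam f y * gaussK t (x - y)) • x
            - (gibbs lam f y * gaussK t (x - y)) • y) := by
      funext y
      match_scalars <;> ring
    rw [heq, integral_smul, integral_sub hqx hqy, integral_smul_const, hwdef]
    rfl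
  have hm : (∫ y, posterior lam f t x y • y) = (smoothedDensity lam f t x)⁻¹ • w := by
    have heq : (fun y => posterior lam f t x y • y)
        = fun y => (smoothedDensity lam f t x)⁻¹ • ((gibbs lam f y * gaussK t (x - y)) • y) := by
      funext y
      rw [posterior, smul_smul, div_eq_mul_inv, mul_comm]
    rw [heq, integral_smul, hwdef]
  have hvec : (lam / t) • (x - ∫ y, posterior lam f t x y • y)
      = (-lam * (smoothedDensity lam f t x)⁻¹) • vint := by
    rw [hm, hv2]
    match_scalars <;> field_simp <;> (left; ring)
  -- conclude
  rw [hasGradientAt_iff_hasFDerivAt]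
  have hfun : (fun x' => smoothedObj lam f t x')
      = fun x' => -lam * Real.log (smoothedDensity lam f t x') := rfl
  rw [hfun]
  refine hobj.congr_fderiv ?_
  ext u
  rw [InnerProductSpace.toDual_apply_apply, hvec]
  simp only [ContinuousLinearMap.coe_smul', Pi.smul_apply, innerSL_apply_apply, smul_eq_mul,
    real_inner_smul_left]
  ring
end

section
/- (Truncated sub-Gaussian second moment) For every a ≥ 0 with P(Y > a) > 0, the conditional second moment satisfies E[Y² | Y > a] ≤ D² + τ², where D = τ·√(log(1/P(Y > a))) is the effective tail radius. -/
open MeasureTheory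

/-- The effective tail radius `D = τ √(log(1/p))` associated with a tail probability `p`. -/
noncomputable def tailRadius (τ p : ℝ) : ℝ := τ * Real.sqrt (Real.log (1 / p))

/-- Exponential integral on a half-line. -/
lemma integral_exp_neg_div_Ioi (c : ℝ) {b : ℝ} (hb : 0 < b) :
    (∫ t in Set.Ioi c, Real.exp (-t / b)) = b * Real.exp (-c / b) := by
  have hderiv : ∀ x ∈ Set.Ici c,
      HasDerivAt (fun t : ℝ => -b * Real.exp (-t / b)) (Real.exp (-x / b)) x := by
    intro x _
    have h1 : HasDerivAt (fun t : ℝ => -t / b) (-1 / b) x := by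
      simpa using ((hasDerivAt_id x).neg.div_const b)
    have h2 : HasDerivAt (fun t : ℝ => Real.exp (-t / b)) (Real.exp (-x / b) * (-1 / b)) x :=
      h1.exp
    have h3 := h2.const_mul (-b)
    refine h3.congr_deriv ?_
    field_simp
  have hint : IntegrableOn (fun x : ℝ => Real.exp (-x / b)) (Set.Ioi c) := by
    have := exp_neg_integrableOn_Ioi c (b := 1 / b) (by positivity)
    refine this.congr_fun (fun x _ => ?_) measurableSet_Ioi
    ring_nf
  have htend : Filter.Tendsto (fun t : ℝ => -b * Real.exp (-t / b)) Filter.atTop (nhds 0) := by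
    have h1 : Filter.Tendsto (fun t : ℝ => -t / b) Filter.atTop Filter.atBot := by
      apply Filter.Tendsto.atBot_div_const hb
      exact Filter.tendsto_neg_atBot_iff.mpr Filter.tendsto_id
    have h2 := Real.tendsto_exp_atBot.comp h1
    simpa using h2.const_mul (-b)
  have := integral_Ioi_of_hasDerivAt_of_tendsto' hderiv hint htend
  rw [this]
  ring

/-- Truncated sub-Gaussian second moment. If `Y ≥ 0` has sub-Gaussian tail
`P(Y > r) ≤ exp(-r²/τ²)` for all `r ≥ 0`, then for every `a ≥ 0` with `P(Y > a) > 0`, the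
conditional second moment satisfies `E[Y² | Y > a] ≤ D² + τ²`, where
`D = τ √(log(1/P(Y > a)))` is the effective tail radius. -/
theorem truncated_subgaussian_second_moment
    {Ω : Type*} [MeasurableSpace Ω] (P : Measure Ω) [IsProbabilityMeasure P]
    (Y : Ω → ℝ) (hYmeas : Measurable Y) (hYnonneg : ∀ ω, 0 ≤ Y ω)
    (τ : ℝ) (hτ : 0 < τ)
    (htail : ∀ r : ℝ, 0 ≤ r →
      P {ω | r < Y ω} ≤ ENNReal.ofReal (Real.exp (-(r ^ 2) / τ ^ 2)))
    (a : ℝ) (ha : 0 ≤ a) (hpos : 0 < (P {ω | a < Y ω}).toReal) :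
    (∫ ω in {ω | a < Y ω}, (Y ω) ^ 2 ∂P) / (P {ω | a < Y ω}).toReal
      ≤ (tailRadius τ ((P {ω | a < Y ω}).toReal)) ^ 2 + τ ^ 2 := by
  set S : Set Ω := {ω | a < Y ω} with hS
  set p : ℝ := (P S).toReal with hp
  set D : ℝ := tailRadius τ p with hD
  have hp1 : p ≤ 1 := by
    rw [hp]
    exact ENNReal.toReal_le_of_le_ofReal one_pos.le (by simpa using prob_le_one)
  have hlog : 0 ≤ Real.log (1 / p) := by
    apply Real.log_nonneg
    rw [le_div_iff₀ hpos]
    simpa using hp1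
  have hD0 : 0 ≤ D := mul_nonneg hτ.le (Real.sqrt_nonneg _)
  have hDsq : D ^ 2 = τ ^ 2 * Real.log (1 / p) := by
    rw [hD, tailRadius, mul_pow, Real.sq_sqrt hlog]
  have hexpD : Real.exp (-(D ^ 2) / τ ^ 2) = p := by
    rw [hDsq]
    have hτ2 : (τ : ℝ) ^ 2 ≠ 0 := by positivity
    rw [Real.log_div one_ne_zero (ne_of_gt hpos), Real.log_one]
    field_simp
    rw [zero_sub, neg_neg]
    exact Real.exp_log hpos
  -- the key set bound
  have hSmeas : MeasurableSet S := measurableSet_lt measurable_const hYmeas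
  rw [div_le_iff₀ hpos]
  -- convert to lintegral
  have hnn : 0 ≤ᵐ[P.restrict S] fun ω => (Y ω) ^ 2 :=
    Filter.Eventually.of_forall fun ω => sq_nonneg _
  have hmeas2 : AEMeasurable (fun ω => (Y ω) ^ 2) (P.restrict S) :=
    ((hYmeas.pow_const 2).aemeasurable)
  rw [integral_eq_lintegral_of_nonneg_ae hnn hmeas2.aestronglyMeasurable]
  -- layer cake
  have hlayer := lintegral_eq_lintegral_meas_lt (P.restrict S) hnn hmeas2
  rw [hlayer]
  -- split the t-integral at D^2
  have hsplit : Set.Ioi (0:ℝ) = Set.Ioc 0 (D ^ 2) ∪ Set.Ioi (D ^ 2) :=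
    (Set.Ioc_union_Ioi_eq_Ioi (by positivity)).symm
  rw [hsplit, lintegral_union measurableSet_Ioi (Set.Ioc_disjoint_Ioi le_rfl)]
  have hbound1 : (∫⁻ t in Set.Ioc (0:ℝ) (D ^ 2), (P.restrict S) {ω | t < (Y ω) ^ 2}) ≤
      ENNReal.ofReal (p * D ^ 2) := by
    calc (∫⁻ t in Set.Ioc (0:ℝ) (D ^ 2), (P.restrict S) {ω | t < (Y ω) ^ 2})
        ≤ ∫⁻ _ in Set.Ioc (0:ℝ) (D ^ 2), P S := by
          apply lintegral_mono
          intro t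
          exact le_trans (measure_mono (Set.subset_univ _))
            (le_of_eq (Measure.restrict_apply_univ S))
      _ = P S * volume (Set.Ioc (0:ℝ) (D ^ 2)) := by rw [setLIntegral_const]
      _ = ENNReal.ofReal (p * D ^ 2) := by
          rw [Real.volume_Ioc, sub_zero, hp, ENNReal.ofReal_mul (by positivity),
            ENNReal.ofReal_toReal (measure_ne_top _ _)]
  have hbound2 : (∫⁻ t in Set.Ioi (D ^ 2), (P.restrict S) {ω | t < (Y ω) ^ 2}) ≤
      ENNReal.ofReal (τ ^ 2 * p) := by
    have hstep : ∀ t ∈ Set.Ioi (D ^ 2),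
        (P.restrict S) {ω | t < (Y ω) ^ 2} ≤ ENNReal.ofReal (Real.exp (-t / τ ^ 2)) := by
      intro t ht
      have ht0 : (0:ℝ) ≤ t := le_trans (by positivity) (le_of_lt ht)
      have hsub : {ω | t < (Y ω) ^ 2} ⊆ {ω | Real.sqrt t < Y ω} := by
        intro ω hω
        have : Real.sqrt t < Real.sqrt ((Y ω) ^ 2) := by
          exact Real.sqrt_lt_sqrt ht0 hω
        rwa [Real.sqrt_sq (hYnonneg ω)] at this
      calc (P.restrict S) {ω | t < (Y ω) ^ 2}
          ≤ P {ω | t < (Y ω) ^ 2} := Measure.restrict_apply_le _ _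
        _ ≤ P {ω | Real.sqrt t < Y ω} := measure_mono hsub
        _ ≤ ENNReal.ofReal (Real.exp (-(Real.sqrt t ^ 2) / τ ^ 2)) :=
            htail _ (Real.sqrt_nonneg t)
        _ = ENNReal.ofReal (Real.exp (-t / τ ^ 2)) := by rw [Real.sq_sqrt ht0]
    calc (∫⁻ t in Set.Ioi (D ^ 2), (P.restrict S) {ω | t < (Y ω) ^ 2})
        ≤ ∫⁻ t in Set.Ioi (D ^ 2), ENNReal.ofReal (Real.exp (-t / τ ^ 2)) :=
          setLIntegral_mono' measurableSet_Ioi hstep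
      _ = ENNReal.ofReal (∫ t in Set.Ioi (D ^ 2), Real.exp (-t / τ ^ 2)) := by
          rw [← ofReal_integral_eq_lintegral_ofReal]
          · have := exp_neg_integrableOn_Ioi (D ^ 2) (b := 1 / τ ^ 2)
              (by positivity)
            refine this.congr_fun (fun x _ => ?_) measurableSet_Ioi
            ring_nf
          · exact Filter.Eventually.of_forall fun t => (Real.exp_pos _).le
      _ = ENNReal.ofReal (τ ^ 2 * p) := by
          rw [integral_exp_neg_div_Ioi _ (by positivity : (0:ℝ) < τ ^ 2), hexpD]
  calc ((∫⁻ t in Set.Ioc (0:ℝ) (D ^ 2), (P.restrict S) {ω | t < (Y ω) ^ 2}) +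
        ∫⁻ t in Set.Ioi (D ^ 2), (P.restrict S) {ω | t < (Y ω) ^ 2}).toReal
      ≤ (ENNReal.ofReal (p * D ^ 2) + ENNReal.ofReal (τ ^ 2 * p)).toReal := by
        apply ENNReal.toReal_mono
        · exact ENNReal.add_ne_top.mpr ⟨ENNReal.ofReal_ne_top, ENNReal.ofReal_ne_top⟩
        · exact add_le_add hbound1 hbound2
    _ = p * D ^ 2 + τ ^ 2 * p := by
        rw [← ENNReal.ofReal_add (by positivity) (by positivity),
          ENNReal.toReal_ofReal (by positivity)]
    _ = (D ^ 2 + τ ^ 2) * p := by ring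
end

section
/- (Convergence of SGD with bounded bias and variance) For every integer k ≥ 0 and every δ ∈ (0,1), with probability at least 1 − δ the iterate satisfies ‖x_k − x*‖² ≤ (1 − ηα/2)^k · ‖x₀ − x*‖² + (η/α + 2η²) · (1/δ) · 4(K² + σ²)/(ηα). -/
open MeasureTheory
open scoped RealInnerProductSpace

set_option maxHeartbeats 1000000 in
lemma sgd_aux_scalar (α β η U G B W I J V : ℝ) (hα : 0 < α) (hαβ : α ≤ β)
    (hη : 0 < η) (hη2 : η ≤ α / (4 * β ^ 2))
    (hU : 0 ≤ U) (hG0 : 0 ≤ G) (hB0 : 0 ≤ B) (hW0 : 0 ≤ W)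
    (hA : α * U ^ 2 ≤ I) (hGB : G ≤ β * U) (hJ : |J| ≤ U * (B + W))
    (hV0 : 0 ≤ V) (hVle : V ≤ G + B + W) :
    U ^ 2 - 2 * (η * (I + J)) + η ^ 2 * V ^ 2
      ≤ (1 - η * α / 2) * U ^ 2 + (2 * η / α + 4 * η ^ 2) * (B ^ 2 + W ^ 2) := by
  have hβ : 0 < β := lt_of_lt_of_le hα hαβ
  have h4 : η * (4 * β ^ 2) ≤ α := (le_div_iff₀ (by positivity)).mp hη2
  have hV2 : V ^ 2 ≤ 2 * G ^ 2 + 4 * B ^ 2 + 4 * W ^ 2 := by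
    nlinarith [mul_self_le_mul_self hV0 hVle, sq_nonneg (G - B - W), sq_nonneg (B - W)]
  have hG2 : G ^ 2 ≤ β ^ 2 * U ^ 2 := by nlinarith
  have hJ' : -J ≤ U * (B + W) := by
    have := (abs_le.mp hJ).1; linarith
  have hcoef : 2 * η ^ 2 * β ^ 2 ≤ η * α / 2 := by nlinarith [hη.le]
  have e : α * ((1 - η * α / 2) * U ^ 2 + (2 * η / α + 4 * η ^ 2) * (B ^ 2 + W ^ 2))
      = α * (1 - η * α / 2) * U ^ 2 + (2 * η + 4 * α * η ^ 2) * (B ^ 2 + W ^ 2) := by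
    field_simp
  have master : α * (U ^ 2 - 2 * (η * (I + J)) + η ^ 2 * V ^ 2)
      ≤ α * ((1 - η * α / 2) * U ^ 2 + (2 * η / α + 4 * η ^ 2) * (B ^ 2 + W ^ 2)) := by
    rw [e]
    have t1 := mul_le_mul_of_nonneg_left hV2 (show (0:ℝ) ≤ α * η ^ 2 by positivity)
    have t2 := mul_le_mul_of_nonneg_left hG2 (show (0:ℝ) ≤ 2 * α * η ^ 2 by positivity)
    have t3 := mul_le_mul_of_nonneg_left hcoef (show (0:ℝ) ≤ α * U ^ 2 by positivity)
    have t4 : -(2 * α * η * J) ≤ η * (α ^ 2 * U ^ 2 + (B + W) ^ 2) := by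
      nlinarith [mul_le_mul_of_nonneg_left hJ' (show (0:ℝ) ≤ 2 * α * η by positivity),
        mul_nonneg hη.le (sq_nonneg (α * U - (B + W)))]
    have t5 := mul_le_mul_of_nonneg_left hA (show (0:ℝ) ≤ 2 * α * η by positivity)
    have t6 : η * (B + W) ^ 2 ≤ η * (2 * B ^ 2 + 2 * W ^ 2) :=
      mul_le_mul_of_nonneg_left (by nlinarith [sq_nonneg (B - W)]) hη.le
    linarith [t1, t2, t3, t4, t5, t6]
  exact le_of_mul_le_mul_left master hα

lemma sgd_step {dim : ℕ} (f : EuclideanSpace ℝ (Fin dim) → ℝ)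
    (α β η : ℝ) (hα : 0 < α) (hαβ : α ≤ β) (hη : 0 < η) (hη2 : η ≤ α / (4 * β ^ 2))
    (hsc : ∀ x y : EuclideanSpace ℝ (Fin dim),
      f x + ⟪gradient f x, y - x⟫ + (α / 2) * ‖y - x‖ ^ 2 ≤ f y)
    (hsm : ∀ x y : EuclideanSpace ℝ (Fin dim),
      ‖gradient f x - gradient f y‖ ≤ β * ‖x - y‖)
    (xstar : EuclideanSpace ℝ (Fin dim)) (hg0 : gradient f xstar = 0)
    (X bb ww : EuclideanSpace ℝ (Fin dim)) :
    ‖(X - η • (gradient f X + bb + ww)) - xstar‖ ^ 2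
      ≤ (1 - η * α / 2) * ‖X - xstar‖ ^ 2
        + (2 * η / α + 4 * η ^ 2) * (‖bb‖ ^ 2 + ‖ww‖ ^ 2) := by
  set g := gradient f X with hg
  have hrw : (X - η • (g + bb + ww)) - xstar = (X - xstar) - η • (g + (bb + ww)) := by
    rw [sub_right_comm, add_assoc]
  rw [hrw]
  have expand : ‖(X - xstar) - η • (g + (bb + ww))‖ ^ 2
      = ‖X - xstar‖ ^ 2 - 2 * (η * (⟪X - xstar, g⟫ + ⟪X - xstar, bb + ww⟫))
        + η ^ 2 * ‖g + (bb + ww)‖ ^ 2 := by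
    rw [norm_sub_sq_real, real_inner_smul_right, inner_add_right, norm_smul]
    rw [Real.norm_eq_abs, mul_pow, sq_abs]
  rw [expand]
  have h1 := hsc X xstar
  rw [← hg] at h1
  have h2 := hsc xstar X
  rw [hg0] at h2
  have hA : α * ‖X - xstar‖ ^ 2 ≤ ⟪X - xstar, g⟫ := by
    have e1 : ⟪g, xstar - X⟫ = -⟪X - xstar, g⟫ := by
      rw [← neg_sub X xstar, inner_neg_right, real_inner_comm]
    have e2 : ‖xstar - X‖ = ‖X - xstar‖ := norm_sub_rev _ _
    have e3 : (⟪(0 : EuclideanSpace ℝ (Fin dim)), X - xstar⟫ : ℝ) = 0 := inner_zero_left _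
    rw [e1, e2] at h1
    rw [e3] at h2
    linarith
  have hGB : ‖g‖ ≤ β * ‖X - xstar‖ := by
    have := hsm X xstar
    rwa [hg0, sub_zero] at this
  have hJ : |⟪X - xstar, bb + ww⟫| ≤ ‖X - xstar‖ * (‖bb‖ + ‖ww‖) :=
    le_trans (abs_real_inner_le_norm _ _)
      (mul_le_mul_of_nonneg_left (norm_add_le _ _) (norm_nonneg _))
  have hVle : ‖g + (bb + ww)‖ ≤ ‖g‖ + ‖bb‖ + ‖ww‖ := by
    calc ‖g + (bb + ww)‖ ≤ ‖g‖ + ‖bb + ww‖ := norm_add_le _ _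
    _ ≤ ‖g‖ + (‖bb‖ + ‖ww‖) := by linarith [norm_add_le bb ww]
    _ = ‖g‖ + ‖bb‖ + ‖ww‖ := by ring
  exact sgd_aux_scalar α β η ‖X - xstar‖ ‖g‖ ‖bb‖ ‖ww‖ _ _ _ hα hαβ hη hη2
    (norm_nonneg _) (norm_nonneg _) (norm_nonneg _) (norm_nonneg _)
    hA hGB hJ (norm_nonneg _) hVle

set_option maxHeartbeats 2000000 in
/-- Convergence of SGD with bounded bias and variance. Let `f` be
`α`-strongly convex and `β`-smooth with minimizer `x*`, let `0 < η ≤ α/(4β²)`, and consider the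
biased noisy gradient descent iterates `x_{k+1} = x_k - η(∇f(x_k) + b_k + w_k)` with
`‖b_k‖ ≤ K` a.s. and `E[‖w_k‖²] ≤ σ²`. Then for every `k` and `δ ∈ (0,1)`, with probability at
least `1 - δ`,
`‖x_k - x*‖² ≤ (1 - ηα/2)^k ‖x₀ - x*‖² + (η/α + 2η²) (1/δ) (4(K² + σ²)/(ηα))`. -/
theorem sgd_bounded_bias_variance_convergence
    {dim : ℕ}
    (f : EuclideanSpace ℝ (Fin dim) → ℝ)
    (α β : ℝ) (hα : 0 < α) (hαβ : α ≤ β)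
    (hC1 : ContDiff ℝ 1 f)
    (hsc : ∀ x y : EuclideanSpace ℝ (Fin dim),
      f x + ⟪gradient f x, y - x⟫ + (α / 2) * ‖y - x‖ ^ 2 ≤ f y)
    (hsm : ∀ x y : EuclideanSpace ℝ (Fin dim),
      ‖gradient f x - gradient f y‖ ≤ β * ‖x - y‖)
    (xstar : EuclideanSpace ℝ (Fin dim)) (hmin : ∀ y, f xstar ≤ f y)
    (η : ℝ) (hη : 0 < η) (hη2 : η ≤ α / (4 * β ^ 2))
    {Ω : Type*} [MeasurableSpace Ω] (P : Measure Ω) [IsProbabilityMeasure P]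
    (b w : ℕ → Ω → EuclideanSpace ℝ (Fin dim))
    (hbmeas : ∀ k, Measurable (b k)) (hwmeas : ∀ k, Measurable (w k))
    (K σ : ℝ) (hK : 0 ≤ K) (hσ : 0 ≤ σ)
    (hb : ∀ k, ∀ᵐ ω ∂P, ‖b k ω‖ ≤ K)
    (hwint : ∀ k, Integrable (fun ω => ‖w k ω‖ ^ 2) P)
    (hw : ∀ k, ∫ ω, ‖w k ω‖ ^ 2 ∂P ≤ σ ^ 2)
    (x0 : EuclideanSpace ℝ (Fin dim)) (x : ℕ → Ω → EuclideanSpace ℝ (Fin dim))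
    (hx0 : ∀ ω, x 0 ω = x0)
    (hrec : ∀ k ω, x (k + 1) ω = x k ω - η • (gradient f (x k ω) + b k ω + w k ω)) :
    ∀ k : ℕ, ∀ δ : ℝ, 0 < δ → δ < 1 →
      ENNReal.ofReal (1 - δ) ≤
        P {ω | ‖x k ω - xstar‖ ^ 2
          ≤ (1 - η * α / 2) ^ k * ‖x0 - xstar‖ ^ 2
            + (η / α + 2 * η ^ 2) * (1 / δ) * (4 * (K ^ 2 + σ ^ 2) / (η * α))} := by
  intro k δ hδ0 hδ1
  have hβ : 0 < β := lt_of_lt_of_le hα hαβ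
  -- gradient at the minimizer vanishes
  have hg0 : gradient f xstar = 0 := by
    have hloc : IsLocalMin f xstar := Filter.Eventually.of_forall hmin
    have hf0 : fderiv ℝ f xstar = 0 := hloc.fderiv_eq_zero
    simp only [gradient, hf0, map_zero]
  -- measurability of iterates
  have hgcont : Continuous (gradient f) := by
    have h1 : Continuous (fderiv ℝ f) := hC1.continuous_fderiv one_ne_zero
    exact (InnerProductSpace.toDual ℝ (EuclideanSpace ℝ (Fin dim))).symm.continuous.comp h1
  have hxm : ∀ j, Measurable (x j) := by
    intro j; induction j with
    | zero =>
      rw [show x 0 = fun _ => x0 from funext hx0]; exact measurable_const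
    | succ n ih =>
      rw [show x (n + 1) = fun ω => x n ω - η • (gradient f (x n ω) + b n ω + w n ω)
        from funext (hrec n)]
      exact ih.sub ((((hgcont.measurable.comp ih).add (hbmeas n)).add (hwmeas n)).const_smul η)
  set ρ : ℝ := 1 - η * α / 2 with hρdef
  set c : ℝ := 2 * η / α + 4 * η ^ 2 with hcdef
  have h4 : η * (4 * β ^ 2) ≤ α := (le_div_iff₀ (by positivity)).mp hη2
  have hηα : 4 * η * α ≤ 1 := by
    have h5 : 4 * η * α * β ^ 2 ≤ β ^ 2 := by
      nlinarith [mul_le_mul_of_nonneg_right h4 hα.le]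
    have hβ2 : 0 < β ^ 2 := by positivity
    nlinarith [h5]
  have hρ0 : 0 ≤ ρ := by
    rw [hρdef]; nlinarith [mul_pos hη hα]
  have hρ1 : ρ < 1 := by
    rw [hρdef]; nlinarith [mul_pos hη hα]
  have hc0 : 0 ≤ c := by rw [hcdef]; positivity
  -- key one-step inequality
  have key : ∀ j ω, ‖x (j + 1) ω - xstar‖ ^ 2
      ≤ ρ * ‖x j ω - xstar‖ ^ 2 + c * (‖b j ω‖ ^ 2 + ‖w j ω‖ ^ 2) := by
    intro j ω
    rw [hrec j ω, hρdef, hcdef]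
    exact sgd_step f α β η hα hαβ hη hη2 hsc hsm xstar hg0 _ _ _
  -- accumulated noise
  set S : ℕ → Ω → ℝ :=
    fun m ω => ∑ j ∈ Finset.range m, ρ ^ (m - 1 - j) * (‖b j ω‖ ^ 2 + ‖w j ω‖ ^ 2) with hSdef
  have path : ∀ m, ∀ ω, ‖x m ω - xstar‖ ^ 2
      ≤ ρ ^ m * ‖x0 - xstar‖ ^ 2 + c * S m ω := by
    intro m; induction m with
    | zero =>
      intro ω
      simp only [hSdef, Finset.range_zero, Finset.sum_empty, pow_zero, one_mul, mul_zero,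
        add_zero, hx0 ω]
      exact le_refl _
    | succ n ih =>
      intro ω
      have h1 := key n ω
      have h2 := mul_le_mul_of_nonneg_left (ih ω) hρ0
      have hS : S (n + 1) ω = ρ * S n ω + (‖b n ω‖ ^ 2 + ‖w n ω‖ ^ 2) := by
        simp only [hSdef, Finset.sum_range_succ, Finset.mul_sum]
        congr 1
        · refine Finset.sum_congr rfl fun j hj => ?_
          have hj' : j < n := Finset.mem_range.mp hj
          rw [show n + 1 - 1 - j = (n - 1 - j) + 1 from by omega, pow_succ]
          ring
        · rw [show n + 1 - 1 - n = 0 from by omega, pow_zero, one_mul]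
      calc ‖x (n + 1) ω - xstar‖ ^ 2
          ≤ ρ * ‖x n ω - xstar‖ ^ 2 + c * (‖b n ω‖ ^ 2 + ‖w n ω‖ ^ 2) := h1
        _ ≤ ρ * (ρ ^ n * ‖x0 - xstar‖ ^ 2 + c * S n ω)
            + c * (‖b n ω‖ ^ 2 + ‖w n ω‖ ^ 2) := by linarith
        _ = ρ ^ (n + 1) * ‖x0 - xstar‖ ^ 2 + c * S (n + 1) ω := by
            rw [hS, pow_succ]; ring
  -- integrability
  have hbint : ∀ j, Integrable (fun ω => ‖b j ω‖ ^ 2) P := by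
    intro j
    refine Integrable.mono' (integrable_const (K ^ 2))
      (((hbmeas j).norm.pow_const 2).aestronglyMeasurable) ?_
    filter_upwards [hb j] with ω hω
    rw [Real.norm_eq_abs, abs_of_nonneg (by positivity)]
    exact pow_le_pow_left₀ (norm_nonneg _) hω 2
  have hNint : ∀ j, Integrable (fun ω => ‖b j ω‖ ^ 2 + ‖w j ω‖ ^ 2) P :=
    fun j => (hbint j).add (hwint j)
  have hSint : Integrable (fun ω => S k ω) P := by
    simp only [hSdef]
    exact integrable_finset_sum _ fun j _ => (hNint j).const_mul _
  have hNE : ∀ j, ∫ ω, (‖b j ω‖ ^ 2 + ‖w j ω‖ ^ 2) ∂P ≤ K ^ 2 + σ ^ 2 := by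
    intro j
    rw [integral_add (hbint j) (hwint j)]
    have h1 : ∫ ω, ‖b j ω‖ ^ 2 ∂P ≤ K ^ 2 := by
      calc ∫ ω, ‖b j ω‖ ^ 2 ∂P ≤ ∫ _ω, K ^ 2 ∂P := by
            refine integral_mono_ae (hbint j) (integrable_const _) ?_
            filter_upwards [hb j] with ω hω
            exact pow_le_pow_left₀ (norm_nonneg _) hω 2
        _ = K ^ 2 := by simp
    linarith [hw j]
  have hgeom : ∑ j ∈ Finset.range k, ρ ^ j ≤ 2 / (η * α) := by
    rw [geom_sum_eq (ne_of_lt hρ1) k]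
    have e : (ρ ^ k - 1) / (ρ - 1) = (1 - ρ ^ k) / (η * α / 2) := by
      rw [div_eq_div_iff (by rw [hρdef]; nlinarith [mul_pos hη hα]) (by positivity)]
      rw [hρdef]; ring
    rw [e, div_le_div_iff₀ (by positivity) (by positivity)]
    nlinarith [pow_nonneg hρ0 k, mul_pos hη hα]
  have hSE : ∫ ω, S k ω ∂P ≤ (K ^ 2 + σ ^ 2) * (2 / (η * α)) := by
    have h1 : ∫ ω, S k ω ∂P
        = ∑ j ∈ Finset.range k, ρ ^ (k - 1 - j) * ∫ ω, (‖b j ω‖ ^ 2 + ‖w j ω‖ ^ 2) ∂P := by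
      simp only [hSdef]
      rw [integral_finset_sum _ fun j _ => (hNint j).const_mul _]
      exact Finset.sum_congr rfl fun j _ => integral_const_mul _ _
    rw [h1]
    calc ∑ j ∈ Finset.range k, ρ ^ (k - 1 - j) * ∫ ω, (‖b j ω‖ ^ 2 + ‖w j ω‖ ^ 2) ∂P
        ≤ ∑ j ∈ Finset.range k, ρ ^ (k - 1 - j) * (K ^ 2 + σ ^ 2) :=
          Finset.sum_le_sum fun j _ => mul_le_mul_of_nonneg_left (hNE j) (pow_nonneg hρ0 _)
      _ = (∑ j ∈ Finset.range k, ρ ^ (k - 1 - j)) * (K ^ 2 + σ ^ 2) := by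
          rw [Finset.sum_mul]
      _ = (∑ j ∈ Finset.range k, ρ ^ j) * (K ^ 2 + σ ^ 2) := by
          rw [Finset.sum_range_reflect (fun i => ρ ^ i) k]
      _ ≤ (2 / (η * α)) * (K ^ 2 + σ ^ 2) :=
          mul_le_mul_of_nonneg_right hgeom (by positivity)
      _ = (K ^ 2 + σ ^ 2) * (2 / (η * α)) := mul_comm _ _
  have hTE : ∫ ω, c * S k ω ∂P ≤ (η / α + 2 * η ^ 2) * (4 * (K ^ 2 + σ ^ 2) / (η * α)) := by
    rw [integral_const_mul]
    calc c * ∫ ω, S k ω ∂P ≤ c * ((K ^ 2 + σ ^ 2) * (2 / (η * α))) :=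
          mul_le_mul_of_nonneg_left hSE hc0
      _ = (η / α + 2 * η ^ 2) * (4 * (K ^ 2 + σ ^ 2) / (η * α)) := by
          rw [hcdef]; field_simp; ring
  have hSnn : ∀ ω, 0 ≤ S k ω := by
    intro ω; simp only [hSdef]
    exact Finset.sum_nonneg fun j _ => by positivity
  have hTnonneg : ∀ ω, 0 ≤ c * S k ω := fun ω => mul_nonneg hc0 (hSnn ω)
  have hTmeas : Measurable (fun ω => c * S k ω) := by
    have : Measurable (fun ω => S k ω) := by
      simp only [hSdef]
      exact Finset.measurable_sum _ fun j _ =>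
        (((hbmeas j).norm.pow_const 2).add ((hwmeas j).norm.pow_const 2)).const_mul _
    exact this.const_mul c
  set Cr : ℝ := (η / α + 2 * η ^ 2) * (4 * (K ^ 2 + σ ^ 2) / (η * α)) with hCrdef
  -- the good event
  have hBsub : {ω | c * S k ω ≤ Cr / δ}
      ⊆ {ω | ‖x k ω - xstar‖ ^ 2
          ≤ ρ ^ k * ‖x0 - xstar‖ ^ 2
            + (η / α + 2 * η ^ 2) * (1 / δ) * (4 * (K ^ 2 + σ ^ 2) / (η * α))} := by
    intro ω hω
    simp only [Set.mem_setOf_eq] at hω ⊢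
    have h1 := path k ω
    have h2 : Cr / δ = (η / α + 2 * η ^ 2) * (1 / δ) * (4 * (K ^ 2 + σ ^ 2) / (η * α)) := by
      rw [hCrdef]; ring
    calc ‖x k ω - xstar‖ ^ 2 ≤ ρ ^ k * ‖x0 - xstar‖ ^ 2 + c * S k ω := h1
      _ ≤ ρ ^ k * ‖x0 - xstar‖ ^ 2 + Cr / δ := add_le_add_right hω _
      _ = ρ ^ k * ‖x0 - xstar‖ ^ 2
          + (η / α + 2 * η ^ 2) * (1 / δ) * (4 * (K ^ 2 + σ ^ 2) / (η * α)) := by rw [h2]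
  have hBmeas : MeasurableSet {ω | c * S k ω ≤ Cr / δ} :=
    measurableSet_le hTmeas measurable_const
  have hcompl : P {ω | c * S k ω ≤ Cr / δ}ᶜ ≤ ENNReal.ofReal δ := by
    have hsetc : {ω | c * S k ω ≤ Cr / δ}ᶜ = {ω | Cr / δ < c * S k ω} := by
      rw [Set.compl_setOf]; simp only [not_le]
    rw [hsetc]
    by_cases hC0 : 0 < K ^ 2 + σ ^ 2
    · have hCr : 0 < Cr := by
        rw [hCrdef]
        exact mul_pos (by positivity) (div_pos (by linarith) (mul_pos hη hα))
      have hδCr : 0 < Cr / δ := div_pos hCr hδ0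
      have hTint : Integrable (fun ω => c * S k ω) P := hSint.const_mul c
      have markov := mul_meas_ge_le_integral_of_nonneg (ae_of_all P hTnonneg) hTint (Cr / δ)
      have h2 : (P {ω | Cr / δ ≤ c * S k ω}).toReal ≤ δ := by
        have h3 : Cr / δ * (P {ω | Cr / δ ≤ c * S k ω}).toReal ≤ Cr := le_trans markov hTE
        have e : Cr / δ * δ = Cr := div_mul_cancel₀ Cr (ne_of_gt hδ0)
        refine le_of_mul_le_mul_left ?_ hδCr
        rw [e]; exact h3
      have hsub2 : {ω | Cr / δ < c * S k ω} ⊆ {ω | Cr / δ ≤ c * S k ω} :=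
        fun ω h => le_of_lt (Set.mem_setOf_eq ▸ h)
      calc P {ω | Cr / δ < c * S k ω} ≤ P {ω | Cr / δ ≤ c * S k ω} := measure_mono hsub2
        _ ≤ ENNReal.ofReal δ :=
            (ENNReal.le_ofReal_iff_toReal_le (measure_ne_top P _) hδ0.le).mpr h2
    · push_neg at hC0
      have hKσ : K ^ 2 + σ ^ 2 = 0 := le_antisymm hC0 (by positivity)
      have hK0 : K = 0 := by nlinarith [sq_nonneg K, sq_nonneg σ]
      have hσ2 : σ ^ 2 = 0 := by nlinarith [sq_nonneg K]
      have hae : ∀ j : ℕ, ∀ᵐ ω ∂P, ‖b j ω‖ ^ 2 + ‖w j ω‖ ^ 2 = 0 := by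
        intro j
        have hb' : ∀ᵐ ω ∂P, ‖b j ω‖ = 0 := by
          filter_upwards [hb j] with ω hω
          have h1 := norm_nonneg (b j ω)
          rw [hK0] at hω; linarith
        have hwi : ∫ ω, ‖w j ω‖ ^ 2 ∂P = 0 :=
          le_antisymm (le_trans (hw j) (le_of_eq hσ2))
            (integral_nonneg fun ω => by positivity)
        have hw' : (fun ω => ‖w j ω‖ ^ 2) =ᵐ[P] 0 :=
          (integral_eq_zero_iff_of_nonneg (fun ω => by positivity) (hwint j)).mp hwi
        filter_upwards [hb', hw'] with ω h1 h2
        have h2' : ‖w j ω‖ ^ 2 = 0 := h2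
        rw [h1, h2']; ring
      have haeS : ∀ᵐ ω ∂P, c * S k ω = 0 := by
        have hall : ∀ᵐ ω ∂P, ∀ j : ℕ, ‖b j ω‖ ^ 2 + ‖w j ω‖ ^ 2 = 0 := ae_all_iff.mpr hae
        filter_upwards [hall] with ω hω
        have : S k ω = 0 := by
          simp only [hSdef]
          exact Finset.sum_eq_zero fun j _ => by rw [hω j, mul_zero]
        rw [this, mul_zero]
      have hnull : P {ω | Cr / δ < c * S k ω} = 0 := by
        refine measure_mono_null (fun ω h => ?_) (ae_iff.mp haeS)
        simp only [Set.mem_setOf_eq] at h ⊢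
        intro heq
        rw [heq] at h
        have : Cr / δ = 0 := by rw [hCrdef, hKσ]; simp
        linarith [this ▸ h]
      rw [hnull]; exact zero_le
  calc ENNReal.ofReal (1 - δ) = 1 - ENNReal.ofReal δ := by
        rw [ENNReal.ofReal_sub 1 hδ0.le, ENNReal.ofReal_one]
    _ ≤ 1 - P {ω | c * S k ω ≤ Cr / δ}ᶜ := tsub_le_tsub_left hcompl 1
    _ = P {ω | c * S k ω ≤ Cr / δ} := by
        rw [prob_compl_eq_one_sub hBmeas, ENNReal.sub_sub_cancel ENNReal.one_ne_top prob_le_one]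
    _ ≤ _ := measure_mono hBsub
end

section
/- (Ratio-of-integrals monotonicity) Let c ∈ ℝ and let u, v : (c, ∞) → ℝ be measurable functions, integrable on (c, D] for every D > c, with v(r) > 0 for all r > c and r ↦ u(r)/v(r) nondecreasing on (c, ∞). Then the map D ↦ (∫_c^D u(r) dr) / (∫_c^D v(r) dr) is nondecreasing on (c, ∞); that is, for all c < D ≤ D', (∫_c^D u)/(∫_c^D v) ≤ (∫_c^{D'} u)/(∫_c^{D'} v). -/
open MeasureTheory

/-- Ratio-of-integrals monotonicity. Let `u, v : (c, ∞) → ℝ` be measurable,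
integrable on `(c, D]` for every `D > c`, with `v > 0` on `(c, ∞)` and `u/v` nondecreasing on
`(c, ∞)`. Then `D ↦ (∫_c^D u)/(∫_c^D v)` is nondecreasing on `(c, ∞)`. -/
theorem ratio_of_integrals_monotone
    (c : ℝ) (u v : ℝ → ℝ)
    (humeas : Measurable u) (hvmeas : Measurable v)
    (hui : ∀ D : ℝ, c < D → IntegrableOn u (Set.Ioc c D))
    (hvi : ∀ D : ℝ, c < D → IntegrableOn v (Set.Ioc c D))
    (hvpos : ∀ r : ℝ, c < r → 0 < v r)
    (hmono : ∀ r s : ℝ, c < r → r ≤ s → u r / v r ≤ u s / v s) :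
    ∀ D D' : ℝ, c < D → D ≤ D' →
      (∫ r in Set.Ioc c D, u r) / (∫ r in Set.Ioc c D, v r)
        ≤ (∫ r in Set.Ioc c D', u r) / (∫ r in Set.Ioc c D', v r) := by
  intro D D' hD hDD'
  have hD' : c < D' := lt_of_lt_of_le hD hDD'
  set m : ℝ := u D / v D with hm
  -- positivity of v-integrals
  have hBpos : ∀ E : ℝ, c < E → 0 < ∫ r in Set.Ioc c E, v r := by
    intro E hE
    have h1 : (∫ r in Set.Ioc c E, v r) = ∫ r in c..E, v r :=
      (intervalIntegral.integral_of_le hE.le).symm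
    rw [h1]
    apply intervalIntegral.intervalIntegral_pos_of_pos_on
    · rw [intervalIntegrable_iff_integrableOn_Ioc_of_le hE.le]
      exact hvi E hE
    · exact fun x hx => hvpos x hx.1
    · exact hE
  have hB : 0 < ∫ r in Set.Ioc c D, v r := hBpos D hD
  have hB' : 0 < ∫ r in Set.Ioc c D', v r := hBpos D' hD'
  -- split integrals
  have hsplit : Set.Ioc c D ∪ Set.Ioc D D' = Set.Ioc c D' :=
    Set.Ioc_union_Ioc_eq_Ioc hD.le hDD'
  have hdisj : Disjoint (Set.Ioc c D) (Set.Ioc D D') := Set.Ioc_disjoint_Ioc_of_le le_rfl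
  have huiDD' : IntegrableOn u (Set.Ioc D D') :=
    (hui D' hD').mono_set (Set.Ioc_subset_Ioc_left hD.le)
  have hviDD' : IntegrableOn v (Set.Ioc D D') :=
    (hvi D' hD').mono_set (Set.Ioc_subset_Ioc_left hD.le)
  have hUsplit : (∫ r in Set.Ioc c D', u r)
      = (∫ r in Set.Ioc c D, u r) + ∫ r in Set.Ioc D D', u r := by
    rw [← hsplit, setIntegral_union hdisj measurableSet_Ioc (hui D hD) huiDD']
  have hVsplit : (∫ r in Set.Ioc c D', v r)
      = (∫ r in Set.Ioc c D, v r) + ∫ r in Set.Ioc D D', v r := by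
    rw [← hsplit, setIntegral_union hdisj measurableSet_Ioc (hvi D hD) hviDD']
  -- key pointwise bounds
  have hA : (∫ r in Set.Ioc c D, u r) ≤ m * ∫ r in Set.Ioc c D, v r := by
    rw [← integral_const_mul]
    apply setIntegral_mono_on (hui D hD) ((hvi D hD).const_mul m) measurableSet_Ioc
    intro r hr
    have := hmono r D hr.1 hr.2
    exact (div_le_iff₀ (hvpos r hr.1)).mp this
  have hA2 : m * (∫ r in Set.Ioc D D', v r) ≤ ∫ r in Set.Ioc D D', u r := by
    rw [← integral_const_mul]
    apply setIntegral_mono_on (hviDD'.const_mul m) huiDD' measurableSet_Ioc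
    intro s hs
    have := hmono D s hD hs.1.le
    exact (le_div_iff₀ (hvpos s (hD.trans hs.1))).mp this
  have hB2 : 0 ≤ ∫ r in Set.Ioc D D', v r := by
    apply setIntegral_nonneg measurableSet_Ioc
    intro s hs
    exact (hvpos s (hD.trans hs.1)).le
  rw [div_le_div_iff₀ hB hB', hUsplit, hVsplit]
  nlinarith [mul_le_mul_of_nonneg_right hA hB2,
    mul_le_mul_of_nonneg_left hA2 hB.le]
end

section
/- For all real constants a > b > 0, the function h : ℝ → ℝ defined by h(y) = (y·e^{−y²/a} − y·e^{−y²/b}) / (e^{−y²/a} + e^{−y²/b}) equals y·tanh( (y²/2)·(1/b − 1/a) ) for every y ∈ ℝ, and h is monotone nondecreasing on ℝ. -/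
/-- For `a > b > 0`, the function
`h(y) = (y e^{-y²/a} - y e^{-y²/b})/(e^{-y²/a} + e^{-y²/b})` equals
`y tanh((y²/2)(1/b - 1/a))` for every `y`, and `h` is monotone nondecreasing on `ℝ`. -/
theorem tanh_ratio_monotone (a b : ℝ) (hb : 0 < b) (hab : b < a) :
    (∀ y : ℝ,
        (y * Real.exp (-y ^ 2 / a) - y * Real.exp (-y ^ 2 / b)) /
            (Real.exp (-y ^ 2 / a) + Real.exp (-y ^ 2 / b))
          = y * Real.tanh ((y ^ 2 / 2) * (1 / b - 1 / a)))
      ∧ Monotone (fun y : ℝ =>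
          (y * Real.exp (-y ^ 2 / a) - y * Real.exp (-y ^ 2 / b)) /
            (Real.exp (-y ^ 2 / a) + Real.exp (-y ^ 2 / b))) := by
  have ha : (0:ℝ) < a := hb.trans hab
  have key : ∀ y : ℝ,
      (y * Real.exp (-y ^ 2 / a) - y * Real.exp (-y ^ 2 / b)) /
          (Real.exp (-y ^ 2 / a) + Real.exp (-y ^ 2 / b))
        = y * Real.tanh ((y ^ 2 / 2) * (1 / b - 1 / a)) := by
    intro y
    set t : ℝ := (y ^ 2 / 2) * (1 / b - 1 / a) with ht
    have hu : Real.exp (-y ^ 2 / a) = Real.exp (-y ^ 2 / b) * (Real.exp t * Real.exp t) := by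
      rw [← Real.exp_add, ← Real.exp_add]
      congr 1
      field_simp [ht]
      rw [ht]; field_simp; ring
    have hv : (0:ℝ) < Real.exp (-y ^ 2 / b) := Real.exp_pos _
    have hE : (0:ℝ) < Real.exp t := Real.exp_pos _
    rw [hu, Real.tanh_eq_sinh_div_cosh, Real.sinh_eq, Real.cosh_eq, Real.exp_neg]
    have hden : Real.exp (-y ^ 2 / b) * (Real.exp t * Real.exp t) + Real.exp (-y ^ 2 / b) > 0 := by
      positivity
    have hden2 : Real.exp t + (Real.exp t)⁻¹ > 0 := by positivity
    field_simp
  refine ⟨key, ?_⟩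
  have hfun : (fun y : ℝ =>
      (y * Real.exp (-y ^ 2 / a) - y * Real.exp (-y ^ 2 / b)) /
        (Real.exp (-y ^ 2 / a) + Real.exp (-y ^ 2 / b)))
      = fun y : ℝ => y * Real.tanh ((y ^ 2 / 2) * (1 / b - 1 / a)) := funext key
  rw [hfun]
  set c : ℝ := 1 / b - 1 / a with hc
  have hcpos : 0 < c := by
    have : 1 / a < 1 / b := one_div_lt_one_div_of_lt hb hab
    rw [hc]; linarith
  -- tanh is monotone
  have htanh_mono : ∀ u v : ℝ, u ≤ v → Real.tanh u ≤ Real.tanh v := by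
    intro u v huv
    rw [Real.tanh_eq_sinh_div_cosh, Real.tanh_eq_sinh_div_cosh,
      div_le_div_iff₀ (Real.cosh_pos _) (Real.cosh_pos _)]
    have h1 : Real.sinh (u - v) ≤ 0 := Real.sinh_nonpos_iff.2 (by linarith)
    rw [Real.sinh_sub] at h1
    linarith
  -- tanh nonneg for nonneg args
  have htanh_nonneg : ∀ z : ℝ, 0 ≤ z → 0 ≤ Real.tanh z := by
    intro z hz
    have := htanh_mono 0 z hz
    simpa using this
  have hnonneg : ∀ x y : ℝ, 0 ≤ x → x ≤ y →
      x * Real.tanh ((x ^ 2 / 2) * c) ≤ y * Real.tanh ((y ^ 2 / 2) * c) := by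
    intro x y hx hxy
    have hx2 : x ^ 2 ≤ y ^ 2 := by nlinarith
    have harg : (x ^ 2 / 2) * c ≤ (y ^ 2 / 2) * c :=
      mul_le_mul_of_nonneg_right (by linarith) hcpos.le
    have h0 : 0 ≤ (x ^ 2 / 2) * c := mul_nonneg (by positivity) hcpos.le
    have htm : Real.tanh ((x ^ 2 / 2) * c) ≤ Real.tanh ((y ^ 2 / 2) * c) :=
      htanh_mono _ _ harg
    exact mul_le_mul hxy htm (htanh_nonneg _ h0) (hx.trans hxy)
  intro x y hxy
  simp only
  rcases le_total 0 x with hx | hx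
  · exact hnonneg x y hx hxy
  · rcases le_total 0 y with hy | hy
    · have h1 : x * Real.tanh ((x ^ 2 / 2) * c) ≤ 0 := by
        have := htanh_nonneg _ (mul_nonneg (by positivity) hcpos.le : (0:ℝ) ≤ (x ^ 2 / 2) * c)
        exact mul_nonpos_of_nonpos_of_nonneg hx this
      have h2 : 0 ≤ y * Real.tanh ((y ^ 2 / 2) * c) := by
        have := htanh_nonneg _ (mul_nonneg (by positivity) hcpos.le : (0:ℝ) ≤ (y ^ 2 / 2) * c)
        exact mul_nonneg hy this
      linarith
    · have h := hnonneg (-y) (-x) (by linarith) (by linarith)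
      have hxx : ((-x) ^ 2 : ℝ) = x ^ 2 := by ring
      have hyy : ((-y) ^ 2 : ℝ) = y ^ 2 := by ring
      rw [hxx, hyy] at h
      nlinarith [h]
end
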